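/- Let D be a digraph, s₁, t₁ vertices with t₁ reachable from s₁, and let D' be obtained from D by adding two new vertices s₁' and t₁', a directed path from s₁' to s₁ of length d_D(s₁,s₁) + 1 = 1 (i.e., the arc s₁'s₁), the arc t₁t₁', and for certain vertices x of D directed paths from s₁' to x of length d_D(s₁,x) + 1 and from certain vertices y to t₁' of length d_D(y,t₁) + 1, all with new internal vertices. Then d_{D'}(s₁', t₁') = d_D(s₁, t₁) + 2. -/

import Mathlib

/-- A directed walk in the digraph with arc relation `A`, given as its list of
vertices (so a walk with `k` arcs is a list of `k+1` vertices). -/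
def IsWalk {V : Type*} (A : V → V → Prop) (s t : V) (p : List V) : Prop :=
  p.head? = some s ∧ p.getLast? = some t ∧ p.Chain' A

/-- A directed path: a walk with no repeated vertices. -/
def IsPath {V : Type*} (A : V → V → Prop) (s t : V) (p : List V) : Prop :=
  IsWalk A s t p ∧ p.Nodup

/-- The list of arcs of a walk given by its vertex list. -/
def arcsOf {V : Type*} (p : List V) : List (V × V) := p.zip p.tail

/-- The directed distance from `s` to `t`: the minimum number of arcs on a
directed path (equivalently, walk) from `s` to `t`, `⊤` if `t` is unreachable. -/
noncomputable def ddist {V : Type*} (A : V → V → Prop) (s t : V) : ℕ∞ :=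
  sInf {n : ℕ∞ | ∃ p : List V, IsWalk A s t p ∧ ((arcsOf p).length : ℕ∞) = n}

/-- The internal vertices of a walk given by its vertex list. -/
def internals {V : Type*} (p : List V) : List V := p.tail.dropLast

/-!
The walk `s₁' → s₁ ⇝ t₁ → t₁'` through a shortest `s₁`–`t₁` walk of `D` gives the upper bound.
For the lower bound, label each vertex of `D'` by its distance from `s₁'` as the construction
intends it: `ι u` gets `d(s₁, u) + 1`, the `i`-th vertex of `P x` gets `i`, the `i`-th vertex of
`Q y` gets `d(s₁, y) + 1 + i`, and `t₁'` gets `d(s₁, t₁) + 2`. The added paths are new and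
internally disjoint, so the labelling is well defined, and no arc raises it by more than one (on
the last arc of `Q y` this is the triangle inequality `d(s₁, t₁) ≤ d(s₁, y) + d(y, t₁)`). Hence
every `s₁'`–`t₁'` walk has at least `d(s₁, t₁) + 2` arcs.
-/

section Walks

variable {V V' : Type*} {A : V → V → Prop} {s t u v : V} {p : List V}

lemma arcsOf_length (p : List V) : (arcsOf p).length = p.length - 1 := by
  simp [arcsOf]

lemma mem_arcsOf {a b : V} :
    (a, b) ∈ arcsOf p ↔ ∃ (i : ℕ) (hi : i + 1 < p.length), p[i] = a ∧ p[i + 1] = b := by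
  simp only [List.mem_iff_getElem, arcsOf, List.getElem_zip, List.getElem_tail, Prod.mk.injEq,
    List.length_zip, List.length_tail]
  constructor
  · rintro ⟨i, hi, h⟩
    exact ⟨i, by omega, h⟩
  · rintro ⟨i, hi, h⟩
    exact ⟨i, by omega, h⟩

lemma getElem_mem_internals {i : ℕ} (h0 : 0 < i) (hi : i + 1 < p.length) :
    p[i] ∈ internals p := by
  rw [internals, List.mem_iff_getElem]
  refine ⟨i - 1, by simp; omega, ?_⟩
  simp only [List.getElem_dropLast, List.getElem_tail]
  congr 1
  omega

lemma le_add_one_of_mem_arcsOf {f : V → ℕ∞} {c : ℕ∞}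
    (heq : ∀ i (hi : i + 1 < p.length), f p[i] = c + i)
    (hle : ∀ i (hi : i < p.length), f p[i] ≤ c + i) {a b : V} (hab : (a, b) ∈ arcsOf p) :
    f b ≤ f a + 1 := by
  obtain ⟨i, hi, rfl, rfl⟩ := mem_arcsOf.mp hab
  calc f p[i + 1] ≤ c + (i + 1 : ℕ) := hle (i + 1) hi
    _ = f p[i] + 1 := by rw [heq i hi]; push_cast; ring

lemma IsWalk.ne_nil (h : IsWalk A s t p) : p ≠ [] := by
  rintro rfl
  simp [IsWalk] at h

lemma IsWalk.getElem_zero (h : IsWalk A s t p) (hp : 0 < p.length) : p[0] = s := by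
  simpa [List.head?_eq_getElem?, hp] using h.1

lemma IsWalk.getElem_of_add_one_eq_length (h : IsWalk A s t p) {i : ℕ} (hi : i + 1 = p.length) :
    p[i] = t := by
  have := h.2.1
  simp only [List.getLast?_eq_getElem?, ← hi, Nat.add_sub_cancel] at this
  simpa [List.getElem?_eq_getElem (show i < p.length by omega)] using this

lemma isWalk_singleton (s : V) : IsWalk A s s [s] := ⟨rfl, rfl, List.isChain_singleton s⟩

lemma isWalk_cons_cons {s' w : V} {r : List V} :
    IsWalk A s t (s' :: w :: r) ↔ s' = s ∧ A s' w ∧ IsWalk A w t (w :: r) := by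
  simp only [IsWalk, List.getLast?_cons_cons, List.head?_cons, Option.some.injEq]
  exact ⟨fun ⟨hs, ht, hc⟩ => ⟨hs, (List.isChain_cons_cons.mp hc).1, trivial, ht,
      (List.isChain_cons_cons.mp hc).2⟩,
    fun ⟨hs, hsw, _, ht, hc⟩ => ⟨hs, ht, List.isChain_cons_cons.mpr ⟨hsw, hc⟩⟩⟩

lemma IsWalk.concat (h : IsWalk A s u p) (huv : A u v) : IsWalk A s v (p ++ [v]) := by
  obtain ⟨hs, hu, hchain⟩ := h
  refine ⟨by simp [List.head?_append, hs], List.getLast?_concat, ?_⟩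
  exact List.isChain_append.mpr ⟨hchain, List.isChain_singleton v, by simp [hu, huv]⟩

lemma IsWalk.map {A' : V' → V' → Prop} (f : V → V') (hf : ∀ a b, A a b → A' (f a) (f b))
    (h : IsWalk A s t p) : IsWalk A' (f s) (f t) (p.map f) := by
  obtain ⟨hs, ht, hchain⟩ := h
  refine ⟨by simp [List.head?_map, hs], by simp [List.getLast?_map, ht], ?_⟩
  exact (List.isChain_map f).mpr (hchain.imp hf)

lemma IsWalk.le_add_length {f : V → ℕ∞} (hf : ∀ a b, A a b → f b ≤ f a + 1)
    (h : IsWalk A s t p) : f t ≤ f s + (arcsOf p).length := by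
  induction p generalizing s with
  | nil => exact absurd rfl h.ne_nil
  | cons c r ih =>
    match r, h with
    | [], h =>
      obtain ⟨hs, ht, -⟩ := h
      simp only [List.head?_cons, List.getLast?_singleton, Option.some.injEq] at hs ht
      simp [← hs, ← ht]
    | w :: r, h =>
      obtain ⟨rfl, hcw, hw⟩ := isWalk_cons_cons.mp h
      calc f t ≤ f w + (arcsOf (w :: r)).length := ih hw
        _ ≤ f c + 1 + (arcsOf (w :: r)).length := by gcongr; exact hf c w hcw
        _ = f c + (arcsOf (c :: w :: r)).length := by
          simp only [arcsOf_length, List.length_cons]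
          push_cast
          ring

end Walks

section Distance

variable {V V' : Type*} {A : V → V → Prop} {s t u v : V} {p : List V}

lemma ddist_le_of_isWalk (h : IsWalk A s t p) : ddist A s t ≤ (arcsOf p).length :=
  sInf_le ⟨p, h, rfl⟩

lemma exists_isWalk_length_eq_ddist (h : ddist A s t ≠ ⊤) :
    ∃ p, IsWalk A s t p ∧ ((arcsOf p).length : ℕ∞) = ddist A s t := by
  refine csInf_mem (s := {n : ℕ∞ | ∃ p, IsWalk A s t p ∧ ((arcsOf p).length : ℕ∞) = n})
    (Set.nonempty_iff_ne_empty.mpr fun hempty => h ?_)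
  rw [ddist, hempty, sInf_empty]

lemma le_add_ddist {f : V → ℕ∞} (hf : ∀ a b, A a b → f b ≤ f a + 1) (s t : V) :
    f t ≤ f s + ddist A s t := by
  by_cases h : ddist A s t = ⊤
  · simp [h]
  obtain ⟨p, hp, hlen⟩ := exists_isWalk_length_eq_ddist h
  exact hlen ▸ hp.le_add_length hf

lemma ddist_self (s : V) : ddist A s s = 0 := by
  simpa [arcsOf] using ddist_le_of_isWalk (isWalk_singleton (A := A) s)

lemma ddist_le_add_one (s : V) (huv : A u v) : ddist A s v ≤ ddist A s u + 1 := by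
  by_cases h : ddist A s u = ⊤
  · simp [h]
  obtain ⟨p, hp, hlen⟩ := exists_isWalk_length_eq_ddist h
  have hp₀ := List.length_pos_iff.mpr hp.ne_nil
  calc ddist A s v ≤ (arcsOf (p ++ [v])).length := ddist_le_of_isWalk (hp.concat huv)
    _ = ddist A s u + 1 := by
      rw [← hlen, arcsOf_length, arcsOf_length, List.length_append, List.length_singleton]
      norm_cast
      omega

lemma ddist_triangle (s u t : V) : ddist A s t ≤ ddist A s u + ddist A u t :=
  le_add_ddist (fun _ _ hab => ddist_le_add_one s hab) u t

lemma ddist_map_le {A' : V' → V' → Prop} (f : V → V') (hf : ∀ a b, A a b → A' (f a) (f b))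
    (s t : V) : ddist A' (f s) (f t) ≤ ddist A s t := by
  refine le_sInf ?_
  rintro _ ⟨p, hp, rfl⟩
  simpa [arcsOf_length] using ddist_le_of_isWalk (hp.map f hf)

end Distance

section AuxiliaryDigraph

variable {V V' : Type*} (A : V → V → Prop) (s₁ t₁ : V) (ι : V ↪ V') (t' : V')
  (U W : Set V) (P Q : V → List V')

-- The final `0` is the value at `s'`.
open Classical in
noncomputable def linkagePotential (v : V') : ℕ∞ :=
  if v = t' then ddist A s₁ t₁ + 2
  else if h : ∃ u, ι u = v then ddist A s₁ h.choose + 1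
  else if h : ∃ x ∈ U, v ∈ internals (P x) then (P h.choose).idxOf v
  else if h : ∃ y ∈ W, v ∈ internals (Q y) then ddist A s₁ h.choose + 1 + (Q h.choose).idxOf v
  else 0

local notation "φ" => linkagePotential A s₁ t₁ ι t' U W P Q

variable {A s₁ t₁ ι t' U W P Q} {A' : V' → V' → Prop} {s' : V'}

lemma linkagePotential_t' : φ t' = ddist A s₁ t₁ + 2 :=
  if_pos rfl

lemma linkagePotential_iota (ht' : t' ∉ Set.range ι) (u : V) : φ (ι u) = ddist A s₁ u + 1 := by
  have hex : ∃ w, ι w = ι u := ⟨u, rfl⟩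
  rw [linkagePotential, if_neg fun h => ht' ⟨u, h⟩, dif_pos hex, ι.injective hex.choose_spec]

lemma linkagePotential_s' (hs' : s' ∉ Set.range ι) (hst' : s' ≠ t')
    (hPnew : ∀ x ∈ U, ∀ z ∈ internals (P x), z ∉ Set.range ι ∧ z ≠ s' ∧ z ≠ t')
    (hQnew : ∀ y ∈ W, ∀ z ∈ internals (Q y), z ∉ Set.range ι ∧ z ≠ s' ∧ z ≠ t') :
    φ s' = 0 := by
  rw [linkagePotential, if_neg hst', dif_neg fun ⟨u, hu⟩ => hs' ⟨u, hu⟩,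
    dif_neg fun ⟨x, hx, hs⟩ => (hPnew x hx s' hs).2.1 rfl,
    dif_neg fun ⟨y, hy, hs⟩ => (hQnew y hy s' hs).2.1 rfl]

open Classical in
lemma linkagePotential_of_mem_internals_P
    (hPnew : ∀ x ∈ U, ∀ z ∈ internals (P x), z ∉ Set.range ι ∧ z ≠ s' ∧ z ≠ t')
    (hPdisj : ∀ x ∈ U, ∀ x' ∈ U, x ≠ x' → ∀ z ∈ internals (P x), z ∉ internals (P x'))
    {x : V} (hx : x ∈ U) {z : V'} (hz : z ∈ internals (P x)) :
    φ z = (P x).idxOf z := by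
  obtain ⟨hι, -, ht'⟩ := hPnew x hx z hz
  have hex : ∃ x' ∈ U, z ∈ internals (P x') := ⟨x, hx, hz⟩
  have hchoose : hex.choose = x :=
    by_contra fun hne => hPdisj _ hex.choose_spec.1 x hx hne z hex.choose_spec.2 hz
  rw [linkagePotential, if_neg ht', dif_neg fun ⟨u, hu⟩ => hι ⟨u, hu⟩, dif_pos hex, hchoose]

open Classical in
lemma linkagePotential_of_mem_internals_Q
    (hQnew : ∀ y ∈ W, ∀ z ∈ internals (Q y), z ∉ Set.range ι ∧ z ≠ s' ∧ z ≠ t')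
    (hQdisj : ∀ y ∈ W, ∀ y' ∈ W, y ≠ y' → ∀ z ∈ internals (Q y), z ∉ internals (Q y'))
    (hPQdisj : ∀ x ∈ U, ∀ y ∈ W, ∀ z ∈ internals (P x), z ∉ internals (Q y))
    {y : V} (hy : y ∈ W) {z : V'} (hz : z ∈ internals (Q y)) :
    φ z = ddist A s₁ y + 1 + (Q y).idxOf z := by
  obtain ⟨hι, -, ht'⟩ := hQnew y hy z hz
  have hex : ∃ y' ∈ W, z ∈ internals (Q y') := ⟨y, hy, hz⟩
  have hchoose : hex.choose = y :=
    by_contra fun hne => hQdisj _ hex.choose_spec.1 y hy hne z hex.choose_spec.2 hz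
  rw [linkagePotential, if_neg ht', dif_neg fun ⟨u, hu⟩ => hι ⟨u, hu⟩,
    dif_neg fun ⟨x, hx, hzx⟩ => hPQdisj x hx y hy z hzx hz, dif_pos hex, hchoose]

lemma linkagePotential_getElem_P (hφs' : φ s' = 0) (ht' : t' ∉ Set.range ι)
    (hPnew : ∀ x ∈ U, ∀ z ∈ internals (P x), z ∉ Set.range ι ∧ z ≠ s' ∧ z ≠ t')
    (hPdisj : ∀ x ∈ U, ∀ x' ∈ U, x ≠ x' → ∀ z ∈ internals (P x), z ∉ internals (P x'))
    {x : V} (hx : x ∈ U)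
    (hPx : IsPath A' s' (ι x) (P x) ∧ ((arcsOf (P x)).length : ℕ∞) = ddist A s₁ x + 1)
    (i : ℕ) (hi : i < (P x).length) : φ (P x)[i] = i := by
  classical
  obtain ⟨⟨hwalk, hnodup⟩, hlen⟩ := hPx
  rcases Nat.eq_zero_or_pos i with rfl | hi₀
  · rw [hwalk.getElem_zero hi, hφs', Nat.cast_zero]
  rcases Nat.lt_or_ge (i + 1) (P x).length with hlt | hge
  · rw [linkagePotential_of_mem_internals_P hPnew hPdisj hx (getElem_mem_internals hi₀ hlt),
      hnodup.idxOf_getElem]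
  · rw [hwalk.getElem_of_add_one_eq_length (by omega), linkagePotential_iota ht', ← hlen,
      arcsOf_length, show (P x).length - 1 = i by omega]

lemma linkagePotential_getElem_Q_of_lt (ht' : t' ∉ Set.range ι)
    (hQnew : ∀ y ∈ W, ∀ z ∈ internals (Q y), z ∉ Set.range ι ∧ z ≠ s' ∧ z ≠ t')
    (hQdisj : ∀ y ∈ W, ∀ y' ∈ W, y ≠ y' → ∀ z ∈ internals (Q y), z ∉ internals (Q y'))
    (hPQdisj : ∀ x ∈ U, ∀ y ∈ W, ∀ z ∈ internals (P x), z ∉ internals (Q y))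
    {y : V} (hy : y ∈ W) (hQy : IsPath A' (ι y) t' (Q y))
    (i : ℕ) (hi : i + 1 < (Q y).length) : φ (Q y)[i] = ddist A s₁ y + 1 + i := by
  classical
  obtain ⟨hwalk, hnodup⟩ := hQy
  rcases Nat.eq_zero_or_pos i with rfl | hi₀
  · rw [hwalk.getElem_zero (by omega), linkagePotential_iota ht', Nat.cast_zero, add_zero]
  · rw [linkagePotential_of_mem_internals_Q hQnew hQdisj hPQdisj hy
      (getElem_mem_internals hi₀ hi), hnodup.idxOf_getElem]

lemma linkagePotential_getElem_Q_le (ht' : t' ∉ Set.range ι)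
    (hQnew : ∀ y ∈ W, ∀ z ∈ internals (Q y), z ∉ Set.range ι ∧ z ≠ s' ∧ z ≠ t')
    (hQdisj : ∀ y ∈ W, ∀ y' ∈ W, y ≠ y' → ∀ z ∈ internals (Q y), z ∉ internals (Q y'))
    (hPQdisj : ∀ x ∈ U, ∀ y ∈ W, ∀ z ∈ internals (P x), z ∉ internals (Q y))
    {y : V} (hy : y ∈ W)
    (hQy : IsPath A' (ι y) t' (Q y) ∧ ((arcsOf (Q y)).length : ℕ∞) = ddist A y t₁ + 1)
    (i : ℕ) (hi : i < (Q y).length) : φ (Q y)[i] ≤ ddist A s₁ y + 1 + i := by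
  rcases Nat.lt_or_ge (i + 1) (Q y).length with hlt | hge
  · exact (linkagePotential_getElem_Q_of_lt ht' hQnew hQdisj hPQdisj hy hQy.1 i hlt).le
  have hdist : ddist A y t₁ + 1 = (i : ℕ∞) := by
    rw [← hQy.2, arcsOf_length, show (Q y).length - 1 = i by omega]
  calc φ (Q y)[i] = ddist A s₁ t₁ + 2 := by
        rw [hQy.1.1.getElem_of_add_one_eq_length (by omega), linkagePotential_t']
    _ ≤ ddist A s₁ y + ddist A y t₁ + 2 := by gcongr; exact ddist_triangle s₁ y t₁
    _ = ddist A s₁ y + 1 + i := by rw [← hdist]; ring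

lemma linkagePotential_le_add_one (hφs' : φ s' = 0) (ht' : t' ∉ Set.range ι)
    (hAD : ∀ u v : V, A' (ι u) (ι v) → A u v)
    (hP : ∀ x ∈ U, IsPath A' s' (ι x) (P x) ∧
      ((arcsOf (P x)).length : ℕ∞) = ddist A s₁ x + 1)
    (hQ : ∀ y ∈ W, IsPath A' (ι y) t' (Q y) ∧
      ((arcsOf (Q y)).length : ℕ∞) = ddist A y t₁ + 1)
    (hPnew : ∀ x ∈ U, ∀ z ∈ internals (P x), z ∉ Set.range ι ∧ z ≠ s' ∧ z ≠ t')
    (hQnew : ∀ y ∈ W, ∀ z ∈ internals (Q y), z ∉ Set.range ι ∧ z ≠ s' ∧ z ≠ t')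
    (hPdisj : ∀ x ∈ U, ∀ x' ∈ U, x ≠ x' → ∀ z ∈ internals (P x), z ∉ internals (P x'))
    (hQdisj : ∀ y ∈ W, ∀ y' ∈ W, y ≠ y' → ∀ z ∈ internals (Q y), z ∉ internals (Q y'))
    (hPQdisj : ∀ x ∈ U, ∀ y ∈ W, ∀ z ∈ internals (P x), z ∉ internals (Q y))
    (harcs : ∀ a b : V', A' a b →
      (∃ u v : V, a = ι u ∧ b = ι v) ∨
      (∃ x ∈ U, (a, b) ∈ arcsOf (P x)) ∨
      (∃ y ∈ W, (a, b) ∈ arcsOf (Q y)))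
    {a b : V'} (hab : A' a b) : φ b ≤ φ a + 1 := by
  rcases harcs a b hab with ⟨u, v, rfl, rfl⟩ | ⟨x, hx, hmem⟩ | ⟨y, hy, hmem⟩
  · rw [linkagePotential_iota ht', linkagePotential_iota ht']
    gcongr
    exact ddist_le_add_one s₁ (hAD u v hab)
  · have hvalue := linkagePotential_getElem_P hφs' ht' hPnew hPdisj hx (hP x hx)
    exact le_add_one_of_mem_arcsOf (c := 0) (fun i hi => by rw [zero_add, hvalue])
      (fun i hi => by rw [zero_add, hvalue]) hmem
  · exact le_add_one_of_mem_arcsOf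
      (linkagePotential_getElem_Q_of_lt ht' hQnew hQdisj hPQdisj hy (hQ y hy).1)
      (linkagePotential_getElem_Q_le ht' hQnew hQdisj hPQdisj hy (hQ y hy)) hmem

end AuxiliaryDigraph

theorem stmt_14_general {V V' : Type*} (A : V → V → Prop) (s₁ t₁ : V)
    (ι : V ↪ V') (s' t' : V')
    (hs' : s' ∉ Set.range ι) (ht' : t' ∉ Set.range ι) (hst' : s' ≠ t')
    (U W : Set V) (hsU : s₁ ∈ U) (htW : t₁ ∈ W)
    (A' : V' → V' → Prop)
    (hAA' : ∀ u v : V, (A' (ι u) (ι v) ↔ A u v))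
    (P Q : V → List V')
    (hP : ∀ x ∈ U, IsPath A' s' (ι x) (P x) ∧
      ((arcsOf (P x)).length : ℕ∞) = ddist A s₁ x + 1)
    (hQ : ∀ y ∈ W, IsPath A' (ι y) t' (Q y) ∧
      ((arcsOf (Q y)).length : ℕ∞) = ddist A y t₁ + 1)
    (hPnew : ∀ x ∈ U, ∀ z ∈ internals (P x), z ∉ Set.range ι ∧ z ≠ s' ∧ z ≠ t')
    (hQnew : ∀ y ∈ W, ∀ z ∈ internals (Q y), z ∉ Set.range ι ∧ z ≠ s' ∧ z ≠ t')
    (hPdisj : ∀ x ∈ U, ∀ x' ∈ U, x ≠ x' →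
      ∀ z ∈ internals (P x), z ∉ internals (P x'))
    (hQdisj : ∀ y ∈ W, ∀ y' ∈ W, y ≠ y' →
      ∀ z ∈ internals (Q y), z ∉ internals (Q y'))
    (hPQdisj : ∀ x ∈ U, ∀ y ∈ W, ∀ z ∈ internals (P x), z ∉ internals (Q y))
    (harcs : ∀ a b : V', A' a b →
      (∃ u v : V, a = ι u ∧ b = ι v) ∨
      (∃ x ∈ U, (a, b) ∈ arcsOf (P x)) ∨
      (∃ y ∈ W, (a, b) ∈ arcsOf (Q y))) :
    ddist A' s' t' = ddist A s₁ t₁ + 2 := by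
  have hφs' : linkagePotential A s₁ t₁ ι t' U W P Q s' = 0 :=
    linkagePotential_s' hs' hst' hPnew hQnew
  have hlower := le_add_ddist (A := A') (fun _ _ hab => linkagePotential_le_add_one hφs' ht'
    (fun u v => (hAA' u v).mp) hP hQ hPnew hQnew hPdisj hQdisj hPQdisj harcs hab) s' t'
  rw [hφs', linkagePotential_t', zero_add] at hlower
  have hstart : ddist A' s' (ι s₁) ≤ 1 := by
    simpa [(hP s₁ hsU).2, ddist_self] using ddist_le_of_isWalk (hP s₁ hsU).1.1
  have hfinish : ddist A' (ι t₁) t' ≤ 1 := by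
    simpa [(hQ t₁ htW).2, ddist_self] using ddist_le_of_isWalk (hQ t₁ htW).1.1
  have hmiddle := ddist_map_le ι (fun u v => (hAA' u v).mpr) s₁ t₁
  refine le_antisymm ?_ hlower
  calc ddist A' s' t'
      ≤ ddist A' s' (ι s₁) + (ddist A' (ι s₁) (ι t₁) + ddist A' (ι t₁) t') :=
        (ddist_triangle _ _ _).trans (add_le_add_right (ddist_triangle _ _ _) _)
    _ ≤ 1 + (ddist A s₁ t₁ + 1) := by gcongr
    _ = ddist A s₁ t₁ + 2 := by ring

/-- the key distance computation in the auxiliary digraph `D'` of the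
short weak 2-linkage algorithm. `D'` (arc relation `A'` on `V'`) is obtained from `D`
(arc relation `A` on `V`, embedded via `ι`) by adding new vertices `s₁', t₁'` and,
for each `x` in a set `U ∋ s₁`, a directed path `P x` from `s₁'` to `x` of length
`d_D(s₁,x) + 1`, and for each `y` in a set `W ∋ t₁`, a directed path `Q y` from `y`
to `t₁'` of length `d_D(y,t₁) + 1`, all with pairwise-distinct new internal vertices,
and no other arcs. Then `d_{D'}(s₁',t₁') = d_D(s₁,t₁) + 2`. -/
theorem stmt_14 {V V' : Type*} (A : V → V → Prop) (s₁ t₁ : V) (dval : ℕ)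
    (hreach : ddist A s₁ t₁ = (dval : ℕ∞))
    (ι : V ↪ V') (s' t' : V')
    (hs' : s' ∉ Set.range ι) (ht' : t' ∉ Set.range ι) (hst' : s' ≠ t')
    (U W : Set V) (hsU : s₁ ∈ U) (htW : t₁ ∈ W)
    (A' : V' → V' → Prop)
    (hAA' : ∀ u v : V, (A' (ι u) (ι v) ↔ A u v))
    (P Q : V → List V')
    (hP : ∀ x ∈ U, IsPath A' s' (ι x) (P x) ∧
      ((arcsOf (P x)).length : ℕ∞) = ddist A s₁ x + 1)
    (hQ : ∀ y ∈ W, IsPath A' (ι y) t' (Q y) ∧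
      ((arcsOf (Q y)).length : ℕ∞) = ddist A y t₁ + 1)
    (hPnew : ∀ x ∈ U, ∀ z ∈ internals (P x), z ∉ Set.range ι ∧ z ≠ s' ∧ z ≠ t')
    (hQnew : ∀ y ∈ W, ∀ z ∈ internals (Q y), z ∉ Set.range ι ∧ z ≠ s' ∧ z ≠ t')
    (hPdisj : ∀ x ∈ U, ∀ x' ∈ U, x ≠ x' →
      ∀ z ∈ internals (P x), z ∉ internals (P x'))
    (hQdisj : ∀ y ∈ W, ∀ y' ∈ W, y ≠ y' →
      ∀ z ∈ internals (Q y), z ∉ internals (Q y'))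
    (hPQdisj : ∀ x ∈ U, ∀ y ∈ W, ∀ z ∈ internals (P x), z ∉ internals (Q y))
    (harcs : ∀ a b : V', A' a b →
      (∃ u v : V, a = ι u ∧ b = ι v) ∨
      (∃ x ∈ U, (a, b) ∈ arcsOf (P x)) ∨
      (∃ y ∈ W, (a, b) ∈ arcsOf (Q y))) :
    ddist A' s' t' = ddist A s₁ t₁ + 2 :=
  stmt_14_general A s₁ t₁ ι s' t' hs' ht' hst' U W hsU htW A' hAA' P Q hP hQ hPnew hQnew hPdisj
    hQdisj hPQdisj harcs
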